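/- For every natural number n and every real γ, one has ∑_{j=0}^{n} (−1)^j · C(n,j) · C(n+j, j) · γ^j = (−1)^n · ∑_{j=0}^{n} (−1)^j · C(n,j) · C(n+j, j) · (1−γ)^j, where C(n,k) denotes the binomial coefficient. -/

import Mathlib

/-!
The sum is the value at `γ` of the shifted Legendre polynomial `Pₙ`. By Rodrigues' formula
`n! Pₙ = (d/dx)ⁿ (xⁿ (1 - x)ⁿ)`, and substituting `x ↦ 1 - x` multiplies the right side by `(-1)ⁿ`.
-/

open Finset

namespace Polynomial

theorem aeval_shiftedLegendre {R : Type*} [Ring R] (n : ℕ) (x : R) :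
    aeval x (shiftedLegendre n) =
      ∑ j ∈ range (n + 1), (-1 : R) ^ j * (n.choose j : R) * ((n + j).choose j : R) * x ^ j := by
  rw [shiftedLegendre, map_sum]
  refine sum_congr rfl fun j _ => ?_
  rw [← Nat.choose_symm_add]
  simp

end Polynomial

theorem stmt_9 (n : ℕ) (γ : ℝ) :
    ∑ j ∈ Finset.range (n + 1),
        (-1 : ℝ) ^ j * (Nat.choose n j : ℝ) * (Nat.choose (n + j) j : ℝ) * γ ^ j
      = (-1 : ℝ) ^ n *
        ∑ j ∈ Finset.range (n + 1),
          (-1 : ℝ) ^ j * (Nat.choose n j : ℝ) * (Nat.choose (n + j) j : ℝ) *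
            (1 - γ) ^ j := by
  simpa only [Polynomial.aeval_shiftedLegendre] using Polynomial.shiftedLegendre_eval_symm n γ
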